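/- arXiv:0709.0555 — 3 statements merged into one kernel-verified Lean document; each statement's English description precedes it below -/
import Mathlib

section
/- There is a constant C > 0 depending only on c (one may take C = √π · e^((1+c)²)) such that for every β ∈ (0,1) and every z ∈ ℂ with |Im z| ≤ β^(1/2), one has |φ(z)| ≤ C. -/
open Complex MeasureTheory

/-- The smoothed cutoff `φ(z) = β^(-1/2) ∫ exp(-((x - z - icβ)²)/β) ψ(x) dx`. -/
noncomputable def phi (ψ : ℝ → ℝ) (β c : ℝ) (z : ℂ) : ℂ :=
  (β ^ (-(1 / 2 : ℝ)) : ℝ) •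
    ∫ x : ℝ, Complex.exp (-((x : ℂ) - z - Complex.I * c * β) ^ 2 / β) * ψ x

/-- There is `C > 0` depending only on `c` (one may take `C = √π e^((1+c)²)`)
such that `|φ(z)| ≤ C` for all `β ∈ (0,1)` and all `z` with `|Im z| ≤ β^(1/2)`. -/
theorem phi_bounded (c : ℝ) (hc : 0 < c) :
    ∃ C > (0 : ℝ), C = Real.sqrt Real.pi * Real.exp ((1 + c) ^ 2) ∧
      ∀ ψ : ℝ → ℝ, ContDiff ℝ (⊤ : ℕ∞) ψ → HasCompactSupport ψ →
        (∀ x, 0 ≤ ψ x) → (∀ x, ψ x ≤ 1) →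
        Function.support ψ ⊆ Set.Ioo (-1) 1 →
        ∀ β : ℝ, 0 < β → β < 1 →
          ∀ z : ℂ, |z.im| ≤ β ^ (1 / 2 : ℝ) →
            ‖phi ψ β c z‖ ≤ C := by
  refine ⟨Real.sqrt Real.pi * Real.exp ((1 + c) ^ 2), by positivity, rfl, ?_⟩
  intro ψ hψ hcs hψ0 hψ1 hsupp β hβ hβ1 z hz
  have hβ' : (0:ℝ) < 1/β := by positivity
  have hsqpos : 0 < Real.sqrt β := Real.sqrt_pos.mpr hβ
  have hsq1 : Real.sqrt β ≤ 1 := by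
    rw [show (1:ℝ) = Real.sqrt 1 by simp]
    exact Real.sqrt_le_sqrt hβ1.le
  have hz' : |z.im| ≤ Real.sqrt β := by rwa [Real.sqrt_eq_rpow]
  have hβle : β ≤ Real.sqrt β := by nlinarith [Real.sq_sqrt hβ.le]
  have hkey : (z.im + c*β)^2 ≤ (1+c)^2 * β := by
    have h1 : |z.im + c*β| ≤ (1+c) * Real.sqrt β := by
      calc |z.im + c*β| ≤ |z.im| + |c*β| := abs_add_le _ _
        _ ≤ Real.sqrt β + c * Real.sqrt β := by
            rw [_root_.abs_of_nonneg (by positivity : (0:ℝ) ≤ c*β)]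
            have : c * β ≤ c * Real.sqrt β := by nlinarith
            linarith
        _ = (1+c) * Real.sqrt β := by ring
    nlinarith [_root_.sq_abs (z.im + c*β), Real.sq_sqrt hβ.le, abs_nonneg (z.im + c*β)]
  set g : ℝ → ℝ := fun x => Real.exp ((1+c)^2) * Real.exp (-(1/β) * (x - z.re)^2) with hg
  have hgint : Integrable g := by
    exact ((integrable_exp_neg_mul_sq hβ').comp_sub_right z.re).const_mul _
  have hbound : ∀ x : ℝ, ‖Complex.exp (-((x:ℂ) - z - Complex.I * c * β)^2 / β) * (ψ x : ℂ)‖ ≤ g x := by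
    intro x
    rw [norm_mul]
    have hre : (-((x:ℂ) - z - Complex.I * c * β)^2 / β).re
        = (-(x - z.re)^2 + (z.im + c*β)^2) / β := by
      rw [Complex.div_ofReal_re]
      simp [pow_two, Complex.mul_re, Complex.mul_im]
      ring
    rw [Complex.norm_exp, hre]
    have h1 : ‖(ψ x : ℂ)‖ ≤ 1 := by
      rw [Complex.norm_real, Real.norm_eq_abs, _root_.abs_of_nonneg (hψ0 x)]
      exact hψ1 x
    have h2 : Real.exp ((-(x - z.re)^2 + (z.im + c*β)^2) / β)
        ≤ Real.exp ((1+c)^2) * Real.exp (-(1/β) * (x - z.re)^2) := by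
      rw [← Real.exp_add]
      apply Real.exp_le_exp.mpr
      have h3 : (z.im + c*β)^2 / β ≤ (1+c)^2 := by
        rw [div_le_iff₀ hβ]; linarith [hkey]
      have heq : (-(x - z.re)^2 + (z.im + c*β)^2) / β
          = -(1/β) * (x - z.re)^2 + (z.im + c*β)^2 / β := by ring
      rw [heq]; linarith
    calc Real.exp ((-(x - z.re)^2 + (z.im + c*β)^2) / β) * ‖(ψ x : ℂ)‖
        ≤ Real.exp ((-(x - z.re)^2 + (z.im + c*β)^2) / β) * 1 :=
          mul_le_mul_of_nonneg_left h1 (Real.exp_nonneg _)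
      _ ≤ g x := by rw [mul_one]; exact h2
  have hnorm : ‖∫ x : ℝ, Complex.exp (-((x:ℂ) - z - Complex.I * c * β)^2 / β) * (ψ x : ℂ)‖
      ≤ ∫ x : ℝ, g x :=
    norm_integral_le_of_norm_le hgint (Filter.Eventually.of_forall hbound)
  have hgval : ∫ x : ℝ, g x = Real.exp ((1+c)^2) * (Real.sqrt Real.pi * Real.sqrt β) := by
    simp only [hg]
    rw [MeasureTheory.integral_const_mul]
    congr 1
    have h4 : ∫ x : ℝ, Real.exp (-(1/β) * (x - z.re)^2)
        = ∫ x : ℝ, Real.exp (-(1/β) * x^2) :=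
      integral_sub_right_eq_self (fun x => Real.exp (-(1/β) * x^2)) z.re
    rw [h4, integral_gaussian]
    rw [show Real.pi / (1/β) = Real.pi * β by field_simp]
    exact Real.sqrt_mul Real.pi_nonneg β
  have hcoef : (β ^ (-(1/2:ℝ)) : ℝ) = (Real.sqrt β)⁻¹ := by
    rw [Real.rpow_neg hβ.le, Real.sqrt_eq_rpow]
  rw [phi, norm_smul, Real.norm_eq_abs,
    _root_.abs_of_nonneg (Real.rpow_nonneg hβ.le _), hcoef]
  calc (Real.sqrt β)⁻¹ * ‖∫ x : ℝ, Complex.exp (-((x:ℂ) - z - Complex.I * c * β)^2 / β) * (ψ x : ℂ)‖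
      ≤ (Real.sqrt β)⁻¹ * (Real.exp ((1+c)^2) * (Real.sqrt Real.pi * Real.sqrt β)) := by
        apply mul_le_mul_of_nonneg_left _ (by positivity)
        rw [← hgval]; exact hnorm
    _ = Real.sqrt Real.pi * Real.exp ((1 + c) ^ 2) := by
        field_simp
end

section
/- Assume additionally that ψ ≡ 1 on [-1/2, 1/2]. Then for every c > 0 there exist β₀ ∈ (0,1) and c₀ > 0 (depending only on ψ and c) such that for every β ∈ (0, β₀] and every z ∈ ℂ with |Re z| ≤ 1/2 and |Im z| ≤ β, one has |φ(z)| ≥ c₀. -/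
open Complex MeasureTheory Real

lemma exponent_eq (β c x p q : ℝ) (hβ : β ≠ 0) :
    -((x : ℂ) - ((p:ℂ) + (q:ℂ)*Complex.I) - Complex.I * c * β) ^ 2 / β =
      ((((q + c*β)^2 - (x - p)^2)/β : ℝ) : ℂ) + (((2*(x - p)*(q + c*β)/β) : ℝ)) * Complex.I := by
  have hβ' : (β : ℂ) ≠ 0 := by exact_mod_cast hβ
  field_simp
  ring_nf
  simp [Complex.I_sq]
  field_simp
  ring

lemma re_formula (ψ : ℝ → ℝ) (β c p q x : ℝ) (hβ : β ≠ 0) :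
    (Complex.exp (-((x:ℂ) - ((p:ℂ)+(q:ℂ)*Complex.I) - Complex.I*c*β)^2/β) * (ψ x : ℂ)).re
      = Real.exp (((q + c*β)^2 - (x - p)^2)/β) * Real.cos (2*(x-p)*(q + c*β)/β) * ψ x := by
  rw [exponent_eq β c x p q hβ]
  simp [Complex.exp_re, Complex.mul_re]
  left
  norm_cast
  norm_num

lemma gauss_integrable (a s : ℝ) (hs : 0 < s) :
    Integrable (fun x : ℝ => Real.exp (-(x - a)^2/s)) := by
  have h := (integrable_exp_neg_mul_sq (show (0:ℝ) < 1/s by positivity)).comp_sub_right a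
  have h2 : (fun x : ℝ => Real.exp (-(x - a)^2/s)) = fun x => Real.exp (-(1/s)*(x-a)^2) := by
    funext x; congr 1; ring
  rw [h2]; exact h

lemma integrand_integrable (ψ : ℝ → ℝ) (hψ : Continuous ψ) (hψc : HasCompactSupport ψ)
    (z : ℂ) (c β : ℝ) :
    Integrable (fun x : ℝ => Complex.exp (-((x : ℂ) - z - Complex.I * c * β) ^ 2 / β) * (ψ x : ℂ)) := by
  have hcont : Continuous (fun x : ℝ =>
      Complex.exp (-((x : ℂ) - z - Complex.I * c * β) ^ 2 / β) * (ψ x : ℂ)) := by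
    apply Continuous.mul
    · apply Continuous.cexp
      apply Continuous.div_const
      apply Continuous.neg
      apply Continuous.pow
      exact (Complex.continuous_ofReal.sub continuous_const).sub continuous_const
    · exact Complex.continuous_ofReal.comp hψ
  have h1 : HasCompactSupport (fun x : ℝ => ((ψ x : ℂ))) :=
    hψc.comp_left (g := fun r : ℝ => (r:ℂ)) (by simp)
  exact hcont.integrable_of_hasCompactSupport h1.mul_left

lemma cos_bound (β c b δ : ℝ) (hβ : 0 < β) (hc1 : 0 < c+1) (hδdef : δ = π/(6*(c+1)))
    (hb : |b| ≤ (c+1)*β) (u : ℝ) (hu : |u| ≤ δ) : 1/2 ≤ Real.cos (2*u*b/β) := by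
  have hδ0 : 0 ≤ δ := by rw [hδdef]; positivity
  have hy : |2*u*b/β| ≤ π/3 := by
    rw [abs_div, abs_mul, abs_mul, abs_of_pos hβ, div_le_iff₀ hβ]
    have h1 : |u| * |b| ≤ δ*((c+1)*β) :=
      mul_le_mul hu hb (abs_nonneg b) hδ0
    have h2 : δ*((c+1)*β) = π/6*β := by rw [hδdef]; field_simp
    calc |(2:ℝ)| * |u| * |b| = 2*(|u| * |b|) := by rw [_root_.abs_of_nonneg (by norm_num : (0:ℝ) ≤ 2)]; ring
    _ ≤ 2*(π/6*β) := by rw [← h2]; linarith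
    _ = π/3*β := by ring
  calc (1:ℝ)/2 = Real.cos (π/3) := Real.cos_pi_div_three.symm
  _ ≤ Real.cos |2*u*b/β| := by
      apply Real.cos_le_cos_of_nonneg_of_le_pi (abs_nonneg _) (by linarith [Real.pi_pos]) hy
  _ = Real.cos (2*u*b/β) := Real.cos_abs _

lemma pointwise_bound (ψ : ℝ → ℝ) (hψ0 : ∀ x, 0 ≤ ψ x) (hψ1 : ∀ x, ψ x ≤ 1)
    (β b δ K a : ℝ) (hβ : 0 < β) (hδ : 0 < δ)
    (hb2 : b^2 ≤ K*β^2) (hcos : ∀ u : ℝ, |u| ≤ δ → 1/2 ≤ Real.cos (2*u*b/β))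
    (G : Set ℝ) (hGδ : ∀ x ∈ G, |x - a| ≤ δ) (hGone : ∀ x ∈ G, ψ x = 1) (x : ℝ) :
    G.indicator (fun x => (1/2) * Real.exp (-(x-a)^2/β)) x
      - Real.exp (K*β) * Real.exp (-δ^2/(2*β)) * Real.exp (-(x-a)^2/(2*β))
    ≤ Real.exp ((b^2 - (x - a)^2)/β) * Real.cos (2*(x-a)*b/β) * ψ x := by
  have hCe : 0 < Real.exp (K*β) * Real.exp (-δ^2/(2*β)) * Real.exp (-(x-a)^2/(2*β)) := by
    positivity
  by_cases hxG : x ∈ G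
  · rw [Set.indicator_of_mem hxG, hGone x hxG, mul_one]
    have h3 := hcos (x-a) (hGδ x hxG)
    have h4 : Real.exp (-(x-a)^2/β) ≤ Real.exp ((b^2-(x-a)^2)/β) := by
      apply Real.exp_le_exp.2
      apply (div_le_div_iff_of_pos_right hβ).2
      nlinarith [sq_nonneg b]
    have h5 := mul_le_mul h4 h3 (by norm_num) (Real.exp_pos _).le
    linarith
  · rw [Set.indicator_of_notMem hxG, zero_sub]
    by_cases hxδ : |x - a| ≤ δ
    · have h3 := hcos (x-a) hxδ
      have h4 : 0 ≤ Real.exp ((b^2 - (x - a)^2)/β) * Real.cos (2*(x-a)*b/β) * ψ x := by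
        apply mul_nonneg (mul_nonneg (Real.exp_pos _).le (by linarith)) (hψ0 x)
      linarith
    · push_neg at hxδ
      have husq : δ^2 ≤ (x-a)^2 := by
        have := pow_le_pow_left₀ hδ.le hxδ.le 2
        nlinarith [_root_.sq_abs (x-a)]
      have h6 : Real.exp ((b^2-(x-a)^2)/β)
          ≤ Real.exp (K*β) * Real.exp (-δ^2/(2*β)) * Real.exp (-(x-a)^2/(2*β)) := by
        rw [← Real.exp_add, ← Real.exp_add]
        apply Real.exp_le_exp.2
        have hexp : (K*β + -δ^2/(2*β) + -(x-a)^2/(2*β)) * β = K*β^2 - δ^2/2 - (x-a)^2/2 := by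
          field_simp; ring
        apply (div_le_iff₀ hβ).2
        rw [hexp]
        nlinarith
      have h7 : -1 ≤ Real.cos (2*(x-a)*b/β) * ψ x := by
        nlinarith [Real.neg_one_le_cos (2*(x-a)*b/β), Real.cos_le_one (2*(x-a)*b/β),
          hψ0 x, hψ1 x]
      have h8 := mul_le_mul_of_nonneg_left h7 (Real.exp_pos ((b^2-(x-a)^2)/β)).le
      rw [mul_assoc]
      nlinarith

lemma integral_g_bound (a β m ℓ t₀ C : ℝ) (hβ : 0 < β) (hm : 0 < m) (hC : 0 < C)
    (hℓ : ℓ = Real.sqrt β * m) (ht₁ : a - ℓ ≤ t₀) (ht₂ : t₀ ≤ a) :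
    Real.sqrt β * (m/2 * Real.exp (-m^2)) - Real.sqrt β * (Real.sqrt (2*π) * C)
      ≤ ∫ x, ((Set.Icc t₀ (t₀+ℓ)).indicator (fun x => (1/2) * Real.exp (-(x-a)^2/β)) x
          - C * Real.exp (-(x-a)^2/(2*β))) := by
  have hℓpos : 0 < ℓ := by rw [hℓ]; positivity
  have hint1 : Integrable (fun x : ℝ => (1/2) * Real.exp (-(x-a)^2/β)) :=
    (gauss_integrable a β hβ).const_mul _
  have hint2 : Integrable (fun x : ℝ => C * Real.exp (-(x-a)^2/(2*β))) :=
    (gauss_integrable a (2*β) (by positivity)).const_mul _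
  rw [integral_sub (hint1.indicator measurableSet_Icc) hint2,
    integral_indicator measurableSet_Icc]
  have e2 : ∫ x : ℝ, Real.exp (-(x-a)^2/(2*β)) = Real.sqrt (2*π) * Real.sqrt β := by
    have h := integral_sub_right_eq_self (μ := volume) (fun x : ℝ => Real.exp (-x^2/(2*β))) a
    rw [h]
    have h2 : (fun x : ℝ => Real.exp (-x^2/(2*β))) = fun x => Real.exp (-(1/(2*β))*x^2) := by
      funext x; congr 1; ring
    rw [h2, integral_gaussian]
    rw [show π/(1/(2*β)) = 2*π*β by field_simp]
    rw [show (2:ℝ)*π*β = (2*π)*β by ring, Real.sqrt_mul (by positivity) β]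
  have hl2 : ℓ^2 = β*m^2 := by rw [hℓ, mul_pow, Real.sq_sqrt hβ.le]
  have e3 : ℓ * ((1/2) * Real.exp (-m^2))
      ≤ ∫ x in Set.Icc t₀ (t₀+ℓ), (1/2) * Real.exp (-(x-a)^2/β) := by
    have hsub : ∀ x ∈ Set.Icc t₀ (t₀+ℓ),
        (1/2) * Real.exp (-m^2) ≤ (1/2) * Real.exp (-(x-a)^2/β) := by
      intro x hx
      obtain ⟨h1, h2⟩ := hx
      have h3 : (x-a)^2 ≤ ℓ^2 := by nlinarith
      apply mul_le_mul_of_nonneg_left _ (by norm_num : (0:ℝ) ≤ 1/2)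
      apply Real.exp_le_exp.2
      rw [show -(x-a)^2/β = -((x-a)^2/β) by ring]
      apply neg_le_neg
      apply (div_le_iff₀ hβ).2
      nlinarith
    calc ℓ * ((1/2) * Real.exp (-m^2))
        = (volume (Set.Icc t₀ (t₀+ℓ))).toReal • ((1/2) * Real.exp (-m^2)) := by
          rw [Real.volume_Icc, show t₀+ℓ-t₀ = ℓ by ring, ENNReal.toReal_ofReal hℓpos.le,
            smul_eq_mul]
      _ = ∫ _x in Set.Icc t₀ (t₀+ℓ), ((1/2) * Real.exp (-m^2)) := (setIntegral_const _).symm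
      _ ≤ ∫ x in Set.Icc t₀ (t₀+ℓ), (1/2) * Real.exp (-(x-a)^2/β) :=
          setIntegral_mono_on (integrableOn_const measure_Icc_lt_top.ne)
            hint1.integrableOn measurableSet_Icc hsub
  have eC : ∫ x : ℝ, C * Real.exp (-(x-a)^2/(2*β)) = C * (Real.sqrt (2*π) * Real.sqrt β) := by
    rw [MeasureTheory.integral_const_mul, e2]
  rw [eC]
  have heq1 : ℓ * ((1/2) * Real.exp (-m^2)) = Real.sqrt β * (m/2 * Real.exp (-m^2)) := by
    rw [hℓ]; ring
  have heq2 : Real.sqrt β * (Real.sqrt (2*π) * C) = C * (Real.sqrt (2*π) * Real.sqrt β) := by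
    ring
  linarith

set_option maxHeartbeats 1000000 in
/-- If in addition `ψ ≡ 1` on `[-1/2, 1/2]`, then for every `c > 0` there are
`β₀ ∈ (0,1)` and `c₀ > 0` such that `|φ(z)| ≥ c₀` whenever `β ∈ (0, β₀]`,
`|Re z| ≤ 1/2` and `|Im z| ≤ β`. -/
theorem phi_lower_bound (ψ : ℝ → ℝ) (hψ : ContDiff ℝ (⊤ : ℕ∞) ψ) (hψc : HasCompactSupport ψ)
    (hψ0 : ∀ x, 0 ≤ ψ x) (hψ1 : ∀ x, ψ x ≤ 1)
    (hsupp : Function.support ψ ⊆ Set.Ioo (-1) 1)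
    (hone : ∀ x ∈ Set.Icc (-(1 / 2) : ℝ) (1 / 2), ψ x = 1)
    (c : ℝ) (hc : 0 < c) :
    ∃ β₀ : ℝ, 0 < β₀ ∧ β₀ < 1 ∧ ∃ c₀ > (0 : ℝ),
      ∀ β : ℝ, 0 < β → β ≤ β₀ →
        ∀ z : ℂ, |z.re| ≤ 1 / 2 → |z.im| ≤ β →
          c₀ ≤ ‖phi ψ β c z‖ := by
  have hπ := Real.pi_pos
  have hc1 : (0:ℝ) < c + 1 := by linarith
  set δ : ℝ := π/(6*(c+1)) with hδdef
  have hδ : 0 < δ := by positivity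
  set m : ℝ := min δ (1/2) with hmdef
  have hm : 0 < m := lt_min hδ (by norm_num)
  have hmδ : m ≤ δ := min_le_left _ _
  have hm2 : m ≤ 1/2 := min_le_right _ _
  set K : ℝ := (c+1)^2 with hKdef
  have hK0 : 0 < K := by positivity
  set c₀ : ℝ := m/4 * Real.exp (-m^2) with hc₀def
  have hc₀pos : 0 < c₀ := by positivity
  set A : ℝ := Real.sqrt (2*π) * Real.exp K with hAdef
  have hApos : 0 < A := by positivity
  set β₀ : ℝ := min (1/2) (c₀*δ^2/(2*A)) with hβ₀def
  have hβ₀pos : 0 < β₀ := lt_min (by norm_num) (by positivity)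
  have hβ₀half : β₀ ≤ 1/2 := min_le_left _ _
  refine ⟨β₀, hβ₀pos, by linarith, c₀, hc₀pos, ?_⟩
  intro β hβ hββ₀ z hzre hzim
  have hβ1 : β ≤ 1 := by linarith
  have hβne : β ≠ 0 := ne_of_gt hβ
  set a : ℝ := z.re with hadef
  set b : ℝ := z.im + c*β with hbdef
  have hb : |b| ≤ (c+1)*β := by
    rw [abs_le] at hzim ⊢
    constructor <;> [linarith [hzim.1, hbdef, mul_pos hc hβ]; linarith [hzim.2, hbdef, mul_pos hc hβ]]
  have hb2 : b^2 ≤ K*β^2 := by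
    have h1 : |b|^2 ≤ ((c+1)*β)^2 := pow_le_pow_left₀ (abs_nonneg b) hb 2
    rw [_root_.sq_abs] at h1
    calc b^2 ≤ ((c+1)*β)^2 := h1
      _ = K*β^2 := by rw [hKdef]; ring
  -- geometry
  set ℓ : ℝ := Real.sqrt β * m with hℓdef
  have hℓpos : 0 < ℓ := by positivity
  have hsqβ : Real.sqrt β ≤ 1 := by
    rw [show (1:ℝ) = Real.sqrt 1 by simp]
    exact Real.sqrt_le_sqrt hβ1
  have hℓm : ℓ ≤ m := by
    calc ℓ = Real.sqrt β * m := rfl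
      _ ≤ 1 * m := mul_le_mul_of_nonneg_right hsqβ hm.le
      _ = m := one_mul m
  have hare : -(1/2) ≤ a ∧ a ≤ 1/2 := abs_le.mp hzre
  set t₀ : ℝ := min a (1/2 - ℓ) with ht₀def
  have ht₀a : t₀ ≤ a := min_le_left _ _
  have ht₀a' : a - ℓ ≤ t₀ := le_min (by linarith) (by linarith [hare.2])
  have ht₀l : -(1/2) ≤ t₀ := le_min hare.1 (by linarith)
  have ht₀r : t₀ + ℓ ≤ 1/2 := by
    have := min_le_right a (1/2 - ℓ)
    linarith
  set G : Set ℝ := Set.Icc t₀ (t₀ + ℓ) with hGdef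
  have hGδ : ∀ x ∈ G, |x - a| ≤ δ := by
    intro x hx
    obtain ⟨h1, h2⟩ := hx
    rw [abs_le]
    exact ⟨by linarith, by linarith⟩
  have hGone : ∀ x ∈ G, ψ x = 1 := by
    intro x hx
    obtain ⟨h1, h2⟩ := hx
    exact hone x ⟨by linarith, by linarith⟩
  set C : ℝ := Real.exp (K*β) * Real.exp (-δ^2/(2*β)) with hCdef
  have hCpos : 0 < C := by positivity
  -- integrability and pointwise comparison
  have hf_int := integrand_integrable ψ hψ.continuous hψc z c β
  have hg_int : Integrable (fun x =>
      G.indicator (fun x => (1/2) * Real.exp (-(x-a)^2/β)) x - C * Real.exp (-(x-a)^2/(2*β))) := by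
    apply Integrable.sub
    · exact ((gauss_integrable a β hβ).const_mul _).indicator measurableSet_Icc
    · exact (gauss_integrable a (2*β) (by positivity)).const_mul _
  have hcos : ∀ u : ℝ, |u| ≤ δ → 1/2 ≤ Real.cos (2*u*b/β) :=
    cos_bound β c b δ hβ hc1 hδdef hb
  have hpoint : ∀ x : ℝ,
      G.indicator (fun x => (1/2) * Real.exp (-(x-a)^2/β)) x - C * Real.exp (-(x-a)^2/(2*β))
        ≤ (Complex.exp (-((x : ℂ) - z - Complex.I * c * β) ^ 2 / β) * (ψ x : ℂ)).re := by
    intro x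
    have h := re_formula ψ β c z.re z.im x hβne
    simp only [Complex.re_add_im] at h
    rw [← hadef, ← hbdef] at h
    rw [h, hCdef]
    exact pointwise_bound ψ hψ0 hψ1 β b δ K a hβ hδ hb2 hcos G hGδ hGone x
  have hmono : ∫ x, (G.indicator (fun x => (1/2) * Real.exp (-(x-a)^2/β)) x
      - C * Real.exp (-(x-a)^2/(2*β)))
      ≤ (∫ x : ℝ, Complex.exp (-((x : ℂ) - z - Complex.I * c * β) ^ 2 / β) * (ψ x : ℂ)).re := by
    have h := integral_re (μ := volume) hf_int
    calc _ ≤ ∫ x : ℝ, (Complex.exp (-((x : ℂ) - z - Complex.I * c * β) ^ 2 / β) * (ψ x : ℂ)).re :=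
          integral_mono hg_int hf_int.re hpoint
      _ = _ := by simpa using h
  have hglow := integral_g_bound a β m ℓ t₀ C hβ hm hCpos hℓdef ht₀a' ht₀a
  -- error bound
  have herr : Real.sqrt (2*π) * C ≤ c₀ := by
    have hx₀ : 0 < δ^2/(2*β₀) := by positivity
    have h1 : Real.exp (K*β) ≤ Real.exp K := by
      apply Real.exp_le_exp.2
      have := mul_le_mul_of_nonneg_left hβ1 hK0.le
      simpa using this
    have h2 : Real.exp (-δ^2/(2*β)) ≤ Real.exp (-(δ^2/(2*β₀))) := by
      apply Real.exp_le_exp.2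
      rw [show -δ^2/(2*β) = -(δ^2/(2*β)) by ring]
      apply neg_le_neg
      apply div_le_div_of_nonneg_left (sq_nonneg δ) (by positivity) (by linarith)
    have h3 : Real.exp (-(δ^2/(2*β₀))) ≤ 1/(δ^2/(2*β₀)) := by
      rw [Real.exp_neg]
      rw [one_div]
      apply inv_anti₀ hx₀
      linarith [Real.add_one_le_exp (δ^2/(2*β₀))]
    have h4 : 1/(δ^2/(2*β₀)) = 2*β₀/δ^2 := by field_simp
    have h5 : β₀ ≤ c₀*δ^2/(2*A) := min_le_right _ _
    have h6 : 2*β₀/δ^2 ≤ c₀/A := by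
      rw [div_le_div_iff₀ (by positivity) (by positivity)]
      calc 2*β₀*A = (2*β₀)*A := by ring
        _ ≤ (2*(c₀*δ^2/(2*A)))*A := mul_le_mul_of_nonneg_right (by linarith) hApos.le
        _ = c₀*δ^2 := by field_simp
    calc Real.sqrt (2*π) * C = Real.sqrt (2*π) * (Real.exp (K*β) * Real.exp (-δ^2/(2*β))) := rfl
      _ ≤ Real.sqrt (2*π) * (Real.exp K * (1/(δ^2/(2*β₀)))) := by
          apply mul_le_mul_of_nonneg_left _ (Real.sqrt_nonneg _)
          calc Real.exp (K*β) * Real.exp (-δ^2/(2*β))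
              ≤ Real.exp K * Real.exp (-(δ^2/(2*β₀))) :=
                mul_le_mul h1 h2 (Real.exp_pos _).le (Real.exp_pos _).le
            _ ≤ Real.exp K * (1/(δ^2/(2*β₀))) :=
                mul_le_mul_of_nonneg_left h3 (Real.exp_pos _).le
      _ = A * (2*β₀/δ^2) := by rw [h4, hAdef]; ring
      _ ≤ A * (c₀/A) := mul_le_mul_of_nonneg_left h6 hApos.le
      _ = c₀ := by field_simp
  -- assemble
  have hsqpos : 0 < Real.sqrt β := Real.sqrt_pos.2 hβ
  have hre_low : c₀ ≤ (phi ψ β c z).re := by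
    have hphire : (phi ψ β c z).re = (Real.sqrt β)⁻¹ *
        (∫ x : ℝ, Complex.exp (-((x : ℂ) - z - Complex.I * c * β) ^ 2 / β) * (ψ x : ℂ)).re := by
      rw [phi, Complex.smul_re, smul_eq_mul]
      congr 1
      rw [Real.rpow_neg hβ.le, Real.sqrt_eq_rpow]
    rw [hphire]
    have hW : Real.sqrt β * (2*c₀ - Real.sqrt (2*π) * C)
        ≤ (∫ x : ℝ, Complex.exp (-((x : ℂ) - z - Complex.I * c * β) ^ 2 / β) * (ψ x : ℂ)).re := by
      have : Real.sqrt β * (2*c₀ - Real.sqrt (2*π) * C)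
          = Real.sqrt β * (m/2 * Real.exp (-m^2)) - Real.sqrt β * (Real.sqrt (2*π) * C) := by
        rw [hc₀def]; ring
      rw [this]
      exact le_trans hglow hmono
    have h9 : 2*c₀ - Real.sqrt (2*π) * C
        = (Real.sqrt β)⁻¹ * (Real.sqrt β * (2*c₀ - Real.sqrt (2*π) * C)) :=
      (inv_mul_cancel_left₀ hsqpos.ne' _).symm
    calc c₀ ≤ 2*c₀ - Real.sqrt (2*π) * C := by linarith
      _ = (Real.sqrt β)⁻¹ * (Real.sqrt β * (2*c₀ - Real.sqrt (2*π) * C)) := h9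
      _ ≤ _ := mul_le_mul_of_nonneg_left hW (by positivity)
  exact le_trans hre_low (Complex.re_le_norm _)
end

section
/- Assume additionally that supp ψ ⊆ [-1+δ, 1-δ] for some δ ∈ (0,1). Then there exists a constant C > 0 (depending only on c and δ) such that for every β ∈ (0,1) and every z ∈ ℂ with |Re z| = 1 and |Im z| ≤ β^(1/2), one has |φ(z)| ≤ C · exp(-δ²/(2β)). -/
set_option maxHeartbeats 1000000


open Complex MeasureTheory

/-- If in addition `supp ψ ⊆ [-1+δ, 1-δ]` for some `δ ∈ (0,1)`, then there is
`C > 0` depending only on `c` and `δ` such that for all `β ∈ (0,1)` and all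
`z` with `|Re z| = 1` and `|Im z| ≤ β^(1/2)`, `|φ(z)| ≤ C exp(-δ²/(2β))`. -/
theorem phi_decay_at_edges (c δ : ℝ) (hc : 0 < c) (hδ0 : 0 < δ) (hδ1 : δ < 1) :
    ∃ C > (0 : ℝ),
      ∀ ψ : ℝ → ℝ, ContDiff ℝ (⊤ : ℕ∞) ψ → HasCompactSupport ψ →
        (∀ x, 0 ≤ ψ x) → (∀ x, ψ x ≤ 1) →
        Function.support ψ ⊆ Set.Ioo (-1) 1 →
        Function.support ψ ⊆ Set.Icc (-1 + δ) (1 - δ) →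
        ∀ β : ℝ, 0 < β → β < 1 →
          ∀ z : ℂ, |z.re| = 1 → |z.im| ≤ β ^ (1 / 2 : ℝ) →
            ‖phi ψ β c z‖ ≤ C * Real.exp (-δ ^ 2 / (2 * β)) := by
  refine ⟨Real.sqrt (2 * Real.pi) * Real.exp ((1 + c) ^ 2), by positivity, ?_⟩
  intro ψ hsm hcs hnn hle hsupp1 hsupp2 β hβ0 hβ1 z hre him
  have hβ0' : (0:ℝ) < β := hβ0
  have hsqrt : β ^ (1 / 2 : ℝ) = Real.sqrt β := (Real.sqrt_eq_rpow β).symm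
  set s := Real.sqrt β with hs
  have hs0 : 0 < s := Real.sqrt_pos.mpr hβ0
  have hs2 : s ^ 2 = β := Real.sq_sqrt hβ0.le
  have hβs : β ≤ s := by
    nlinarith [Real.sqrt_nonneg β]
  set b := 1 / (2 * β) with hb
  have hb0 : 0 < b := by positivity
  set E := Real.exp ((1 + c) ^ 2) * Real.exp (-δ ^ 2 / (2 * β)) with hE
  have hE0 : 0 < E := by positivity
  -- pointwise bound
  have key : ∀ x : ℝ, ‖Complex.exp (-((x : ℂ) - z - Complex.I * c * β) ^ 2 / β) * ψ x‖ ≤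
      E * Real.exp (-b * (x - z.re) ^ 2) := by
    intro x
    by_cases hx : ψ x = 0
    · rw [hx]
      simp only [Complex.ofReal_zero, mul_zero, norm_zero]
      positivity
    · have hxs : x ∈ Set.Icc (-1 + δ) (1 - δ) := hsupp2 hx
      have hd2 : δ ^ 2 ≤ (x - z.re) ^ 2 := by
        rcases abs_eq (by norm_num : (0:ℝ) ≤ 1) |>.mp hre with h1 | h1
        · nlinarith [hxs.2]
        · nlinarith [hxs.1]
      have he2 : (z.im + c * β) ^ 2 ≤ (1 + c) ^ 2 * β := by
        have h1 : |z.im| ≤ s := hsqrt ▸ him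
        have h2 : c * β ≤ c * s := by nlinarith
        have habs : |z.im + c * β| ≤ (1 + c) * s := by
          calc |z.im + c * β| ≤ |z.im| + |c * β| := abs_add_le _ _
            _ ≤ s + c * s := by
                rw [_root_.abs_of_nonneg (by positivity : (0:ℝ) ≤ c * β)]; linarith
            _ = (1 + c) * s := by ring
        calc (z.im + c * β) ^ 2 ≤ ((1 + c) * s) ^ 2 := by
              rw [← _root_.sq_abs (z.im + c * β)]
              exact pow_le_pow_left₀ (abs_nonneg _) habs 2
          _ = (1 + c) ^ 2 * β := by rw [mul_pow, hs2]
      have hre2 : (-(((x : ℂ) - z - Complex.I * c * β) ^ 2) / (β : ℂ)).re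
          = (-((x - z.re) ^ 2) + (z.im + c * β) ^ 2) / β := by
        rw [div_ofReal_re]
        simp only [neg_re, pow_two, mul_re, sub_re, sub_im, ofReal_re, ofReal_im,
          Complex.mul_im, Complex.I_re, Complex.I_im]
        ring
      have hnorm : ‖Complex.exp (-((x : ℂ) - z - Complex.I * c * β) ^ 2 / β) * ψ x‖
          = Real.exp ((-((x - z.re) ^ 2) + (z.im + c * β) ^ 2) / β) * |ψ x| := by
        rw [norm_mul, Complex.norm_exp, hre2, Complex.norm_real,
          Real.norm_eq_abs]
      rw [hnorm]
      have hψ1 : |ψ x| ≤ 1 := abs_le.mpr ⟨by linarith [hnn x], hle x⟩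
      calc Real.exp ((-((x - z.re) ^ 2) + (z.im + c * β) ^ 2) / β) * |ψ x|
          ≤ Real.exp ((-((x - z.re) ^ 2) + (z.im + c * β) ^ 2) / β) * 1 := by
            exact mul_le_mul_of_nonneg_left hψ1 (Real.exp_nonneg _)
        _ = Real.exp ((-((x - z.re) ^ 2) + (z.im + c * β) ^ 2) / β) := mul_one _
        _ ≤ E * Real.exp (-b * (x - z.re) ^ 2) := by
            rw [hE, ← Real.exp_add, ← Real.exp_add]
            apply Real.exp_le_exp.mpr
            rw [hb, ← sub_nonneg]
            have htr : ((1 + c) ^ 2 + -δ ^ 2 / (2 * β) + -(1 / (2 * β)) * (x - z.re) ^ 2)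
                - ((-(x - z.re) ^ 2 + (z.im + c * β) ^ 2) / β)
                = ((1 + c) ^ 2 * (2 * β) - δ ^ 2 + (x - z.re) ^ 2
                    - 2 * (z.im + c * β) ^ 2) / (2 * β) := by
              field_simp; ring
            rw [htr]
            apply div_nonneg _ (by positivity)
            linarith [hd2, he2]
  -- integrability of the dominating function
  have hg : Integrable (fun x : ℝ => E * Real.exp (-b * (x - z.re) ^ 2)) := by
    exact ((integrable_exp_neg_mul_sq hb0).comp_sub_right z.re).const_mul E
  have hbound : ‖∫ x : ℝ, Complex.exp (-((x : ℂ) - z - Complex.I * c * β) ^ 2 / β) * ψ x‖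
      ≤ ∫ x : ℝ, E * Real.exp (-b * (x - z.re) ^ 2) := by
    apply norm_integral_le_of_norm_le hg
    exact Filter.Eventually.of_forall key
  have hint : ∫ x : ℝ, E * Real.exp (-b * (x - z.re) ^ 2) = E * Real.sqrt (Real.pi / b) := by
    rw [integral_const_mul]
    congr 1
    rw [show (fun x : ℝ => Real.exp (-b * (x - z.re) ^ 2)) = fun x => (fun y => Real.exp (-b * y ^ 2)) (x - z.re) from rfl]
    rw [integral_sub_right_eq_self (fun y : ℝ => Real.exp (-b * y ^ 2)) z.re]
    exact integral_gaussian b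
  have hsqrtb : Real.sqrt (Real.pi / b) = Real.sqrt (2 * Real.pi) * s := by
    rw [hb]
    rw [show Real.pi / (1 / (2 * β)) = (2 * Real.pi) * β by field_simp]
    rw [Real.sqrt_mul (by positivity) β]
  have hrpow : (β ^ (-(1 / 2 : ℝ)) : ℝ) = 1 / s := by
    rw [Real.rpow_neg hβ0.le, ← Real.sqrt_eq_rpow]
    simp [hs]
  rw [phi]
  rw [norm_smul, Real.norm_eq_abs, hrpow, abs_of_pos (by positivity : (0:ℝ) < 1 / s)]
  calc (1 / s) * ‖∫ x : ℝ, Complex.exp (-((x : ℂ) - z - Complex.I * c * β) ^ 2 / β) * ψ x‖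
      ≤ (1 / s) * (E * (Real.sqrt (2 * Real.pi) * s)) := by
        apply mul_le_mul_of_nonneg_left _ (by positivity)
        rw [← hsqrtb, ← hint]; exact hbound
    _ = Real.sqrt (2 * Real.pi) * Real.exp ((1 + c) ^ 2) * Real.exp (-δ ^ 2 / (2 * β)) := by
        rw [hE]; field_simp
end
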